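/- arXiv:1007.2080 — 3 statements merged into one kernel-verified Lean document; each statement's English description precedes it below -/
import Mathlib

section
/- Let G be a group and let g₁, …, gₙ ∈ G have the following property: for each j with 1 ≤ j ≤ n there exist positive integers K_{j,1}, …, K_{j,n} such that for every positive integer m there exists a finite group H_{j,m} and a group homomorphism φ_{j,m} : G → H_{j,m} with the order of φ_{j,m}(g_k) equal to K_{j,k} for all k ≠ j and the order of φ_{j,m}(g_j) equal to m·K_{j,j}. Then there exists a positive integer K such that for every sequence of positive integers l₁, …, lₙ there exists a finite group H and a surjective group homomorphism ψ : G → H with the order of ψ(gᵢ) equal to K·lᵢ for every i. -/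
/-!
Let `C` be the product of all the constants `K_{j,k}`. Given `l`, use the hypothesis for `j`
with `m_j = (C / K_{j,j}) l_j`, so that `φ_j(g_j)` has order exactly `C l_j` while `φ_j(g_k)`
has order dividing `C`. In the product of the `φ_j` the order of the image of `g_i` is the lcm
of the orders of its coordinates, which is `C l_i`; restricting the codomain to the image gives
the required surjection.
-/

universe u

theorem Pi.orderOf_eq_of_forall_dvd {ι : Type*} {α : ι → Type*} [∀ i, Monoid (α i)]
    {x : ∀ i, α i} {N : ℕ} {i₀ : ι} (hdvd : ∀ i, orderOf (x i) ∣ N)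
    (hi₀ : orderOf (x i₀) = N) : orderOf x = N :=
  Nat.dvd_antisymm
    (orderOf_dvd_of_pow_eq_one (funext fun i => orderOf_dvd_iff_pow_eq_one.1 (hdvd i)))
    (hi₀ ▸ orderOf_apply_dvd_orderOf i₀)

theorem MonoidHom.orderOf_rangeRestrict {G H : Type*} [Group G] [Group H] (f : G →* H)
    (x : G) : orderOf (f.rangeRestrict x) = orderOf (f x) :=
  (Subgroup.orderOf_coe _).symm

theorem MonoidHom.exists_surjective_orderOf_eq {G : Type*} {H : Type u} [Group G] [Group H]
    [Finite H] (f : G →* H) :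
    ∃ (H' : Type u) (_ : Group H') (_ : Finite H') (ψ : G →* H'),
      Function.Surjective ψ ∧ ∀ x, orderOf (ψ x) = orderOf (f x) :=
  ⟨f.range, inferInstance, inferInstance, f.rangeRestrict, f.rangeRestrict_surjective,
    f.orderOf_rangeRestrict⟩

/-- Lemma 2 of the paper, due to Wise. Let `G` be a group and
`g₁, …, gₙ ∈ G` be such that for each `j` there are positive constants `K_{j,1}, …, K_{j,n}`
such that for every positive `m` there is a homomorphism `φ_{j,m}` of `G` to a finite group
with `orderOf (φ_{j,m} g_k) = K_{j,k}` for `k ≠ j` and `orderOf (φ_{j,m} g_j) = m * K_{j,j}`.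
Then there is `K > 0` such that for every sequence of positive integers `l₁, …, lₙ` there is
a surjection `ψ` of `G` onto a finite group with `orderOf (ψ gᵢ) = K * lᵢ` for all `i`. -/
theorem omnipotence_of_independent_order_control
    {G : Type*} [Group G] (n : ℕ) (g : Fin n → G)
    (h : ∀ j : Fin n, ∃ K : Fin n → ℕ, (∀ k, 0 < K k) ∧
      ∀ m : ℕ, 0 < m →
        ∃ (H : Type) (_ : Group H) (_ : Finite H) (φ : G →* H),
          (∀ k, k ≠ j → orderOf (φ (g k)) = K k) ∧
          orderOf (φ (g j)) = m * K j) :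
    ∃ K : ℕ, 0 < K ∧ ∀ l : Fin n → ℕ, (∀ i, 0 < l i) →
      ∃ (H : Type) (_ : Group H) (_ : Finite H) (ψ : G →* H),
        Function.Surjective ψ ∧ ∀ i, orderOf (ψ (g i)) = K * l i := by
  choose K hK_pos hφ using h
  set C := ∏ p : Fin n × Fin n, K p.1 p.2
  have hK_dvd (j k : Fin n) : K j k ∣ C := Finset.dvd_prod_of_mem _ (Finset.mem_univ (j, k))
  have hC_pos : 0 < C := Finset.prod_pos fun p _ => hK_pos p.1 p.2
  refine ⟨C, hC_pos, fun l hl => ?_⟩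
  have hm_pos (j : Fin n) : 0 < C / K j j * l j :=
    Nat.mul_pos (Nat.div_pos (Nat.le_of_dvd hC_pos (hK_dvd j j)) (hK_pos j j)) (hl j)
  choose H _ _ φ hφ_off hφ_diag using fun j => hφ j _ (hm_pos j)
  have hφ_self (i : Fin n) : orderOf (φ i (g i)) = C * l i := by
    rw [hφ_diag, mul_right_comm, Nat.div_mul_cancel (hK_dvd i i)]
  have hφ_dvd (i j : Fin n) : orderOf (φ j (g i)) ∣ C * l i := by
    rcases eq_or_ne j i with rfl | hji
    · exact (hφ_self j).dvd
    · exact hφ_off j i hji.symm ▸ (hK_dvd j i).mul_right (l i)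
  obtain ⟨H', hH'_group, hH'_finite, ψ, hψ_surj, hψ_ord⟩ :=
    (MonoidHom.pi φ).exists_surjective_orderOf_eq
  exact ⟨H', hH'_group, hH'_finite, ψ, hψ_surj, fun i =>
    (hψ_ord (g i)).trans (Pi.orderOf_eq_of_forall_dvd (hφ_dvd i) (hφ_self i))⟩
end

section
/- Let G = A ∗ B be the free product of two residually finite groups A and B, and let u ∈ G be an element that does not lie in any conjugate of A or of B. Then there exists a positive integer K such that for every positive integer l there exists a finite group H and a surjective group homomorphism φ : G → H such that the order of φ(u) equals K·l. -/
/-!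
Up to conjugacy, `u` is a cyclically reduced alternating product `w = a₁b₁⋯aₙbₙ`, and residual
finiteness gives finite quotients `P`, `Q` of `A`, `B` in which every letter stays nontrivial.
Let `P ∗ Q` act on the finite set `X = ℤ/n × P × Q` so that, read from the right, the pairs of `w`
carry `(i, 1, 1)` to `(i + 1, 1, 1)`; then `w` fixes `x₀ = (0, 1, 1)`. Twisting the action of `Q`
on `ℤ/m × X` by the coboundary of the indicator of `{x | x.2.2 ≠ 1}` makes `w` act by a skew map
`σ : (k, x) ↦ (k + Φ x, π x)` with `Φ x₀ = n ≠ 0`. The order of `σ` is `ord π` times the order of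
the translation `σ ^ ord π`, and with `m = gcd(T) · l`, where `T` is the translation vector,
the latter order is exactly `l`. So `K = ord π` works.
-/

open scoped Monoid.Coprod

open Monoid Equiv

theorem IsConj.orderOf_eq {G : Type*} [Group G] {a b : G} (h : IsConj a b) :
    orderOf a = orderOf b := by
  obtain ⟨c, hc⟩ := h
  exact hc.orderOf_eq

namespace FreeProductOrder

section AltProd

variable {P Q : Type*} [Group P] [Group Q]

def altProd (L : List (P × Q)) : P ∗ Q :=
  (L.map fun p => Coprod.inl p.1 * Coprod.inr p.2).prod

@[simp] theorem altProd_nil : altProd ([] : List (P × Q)) = 1 := rfl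

@[simp] theorem altProd_cons (p : P × Q) (L : List (P × Q)) :
    altProd (p :: L) = Coprod.inl p.1 * Coprod.inr p.2 * altProd L := by
  simp [altProd]

theorem altProd_append (L M : List (P × Q)) : altProd (L ++ M) = altProd L * altProd M := by
  simp [altProd]

theorem exists_altProd_eq (u : P ∗ Q) : ∃ L : List (P × Q), altProd L = u := by
  induction u using Coprod.induction_on with
  | inl a => exact ⟨[(a, 1)], by simp⟩
  | inr b => exact ⟨[(1, b)], by simp⟩
  | mul x y hx hy =>
    obtain ⟨L, rfl⟩ := hx
    obtain ⟨M, rfl⟩ := hy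
    exact ⟨L ++ M, altProd_append L M⟩

theorem map_altProd {P' Q' : Type*} [Group P'] [Group Q'] (ψ : P →* P') (χ : Q →* Q')
    (L : List (P × Q)) :
    Coprod.map ψ χ (altProd L) = altProd (L.map (Prod.map ψ χ)) := by
  induction L with
  | nil => simp
  | cons p L ih => simp [ih]

theorem isConj_altProd_append_comm (L M : List (P × Q)) :
    IsConj (altProd (L ++ M)) (altProd (M ++ L)) :=
  isConj_iff.mpr ⟨(altProd L)⁻¹, by simp [altProd_append]⟩

theorem altProd_mk_one_cons (a : P) (q : P × Q) (L : List (P × Q)) :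
    altProd ((a, 1) :: q :: L) = altProd ((a * q.1, q.2) :: L) := by
  simp [mul_assoc]

theorem altProd_append_mk_one (L : List (P × Q)) (q : P × Q) (b : Q) :
    altProd (L ++ [q, (1, b)]) = altProd (L ++ [(q.1, q.2 * b)]) := by
  simp [altProd_append, mul_assoc]

def CyclicallyReduced (L : List (P × Q)) : Prop :=
  L ≠ [] ∧ ∀ p ∈ L, p.1 ≠ 1 ∧ p.2 ≠ 1

theorem exists_cyclicallyReduced_isConj {u : P ∗ Q}
    (hP : ∀ a, ¬ IsConj u (Coprod.inl a)) (hQ : ∀ b, ¬ IsConj u (Coprod.inr b)) :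
    ∃ L, CyclicallyReduced L ∧ IsConj u (altProd L) := by
  obtain ⟨L, hL⟩ := exists_altProd_eq u
  replace hL : IsConj u (altProd L) := hL ▸ IsConj.refl u
  induction hn : L.length using Nat.strong_induction_on generalizing L with
  | _ n ih =>
    subst hn
    by_cases hred : CyclicallyReduced L
    · exact ⟨L, hred, hL⟩
    obtain rfl | ⟨⟨a, b⟩, hpL, hp⟩ : L = [] ∨ ∃ p ∈ L, p.1 = 1 ∨ p.2 = 1 := by
      simpa only [CyclicallyReduced, not_and_or, not_not, not_forall, Classical.not_imp,
        exists_prop] using hred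
    · exact (hP 1 (by simpa using hL)).elim
    obtain ⟨L₁, L₂, rfl⟩ := List.append_of_mem hpL
    rcases hp with rfl | rfl
    · -- the letter `(1, b)` merges into its cyclic predecessor
      have hrot : IsConj u (altProd (L₂ ++ L₁ ++ [(1, b)])) := by
        rw [List.append_cons] at hL
        simpa using hL.trans (isConj_altProd_append_comm _ _)
      obtain hR | ⟨R, q, hR⟩ := (L₂ ++ L₁).eq_nil_or_concat
      · exact (hQ b (by simpa [hR] using hrot)).elim
      · rw [hR, List.concat_eq_append, List.append_assoc, List.singleton_append,
          altProd_append_mk_one] at hrot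
        refine ih _ ?_ _ hrot rfl
        have := congrArg List.length hR
        grind
    · -- the letter `(a, 1)` merges into its cyclic successor
      have hrot : IsConj u (altProd ((a, 1) :: (L₂ ++ L₁))) :=
        hL.trans (isConj_altProd_append_comm L₁ ((a, 1) :: L₂))
      rcases hR : L₂ ++ L₁ with _ | ⟨q, R⟩
      · exact (hP a (by simpa [hR] using hrot)).elim
      · rw [hR, altProd_mk_one_cons] at hrot
        refine ih _ ?_ _ hrot rfl
        have := congrArg List.length hR
        grind

end AltProd

section Skew

variable {X : Type*} {m : ℕ}

def skew (m : ℕ) (π : Perm X) (Φ : X → ℤ) : Perm (ZMod m × X) where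
  toFun y := (y.1 + Φ y.2, π y.2)
  invFun y := (y.1 - Φ (π.symm y.2), π.symm y.2)
  left_inv y := by simp
  right_inv y := by simp

@[simp] theorem skew_apply (π : Perm X) (Φ : X → ℤ) (k : ZMod m) (x : X) :
    skew m π Φ (k, x) = (k + Φ x, π x) := rfl

theorem skew_mul (π σ : Perm X) (Φ Ψ : X → ℤ) :
    skew m π Φ * skew m σ Ψ = skew m (π * σ) (Ψ + Φ ∘ σ) := by
  ext ⟨k, x⟩ <;> simp [add_assoc]

theorem skew_one_zero : skew m 1 (0 : X → ℤ) = 1 := by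
  ext ⟨k, x⟩ <;> simp

theorem skew_pow (π : Perm X) (Φ : X → ℤ) (j : ℕ) :
    skew m π Φ ^ j = skew m (π ^ j) (∑ r ∈ Finset.range j, Φ ∘ ⇑(π ^ r)) := by
  induction j with
  | zero => simp [skew_one_zero]
  | succ j ih => rw [pow_succ', ih, skew_mul, ← pow_succ', Finset.sum_range_succ]

theorem skew_eq_one_iff {π : Perm X} {Φ : X → ℤ} :
    skew m π Φ = 1 ↔ π = 1 ∧ ∀ x, (m : ℤ) ∣ Φ x := by
  simp only [← ZMod.intCast_zmod_eq_zero_iff_dvd, Equiv.ext_iff, Prod.forall, skew_apply,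
    Perm.one_apply, Prod.mk.injEq, add_eq_left]
  exact ⟨fun h => ⟨fun x => (h 0 x).2, fun x => (h 0 x).1⟩, fun h k x => ⟨h.2 x, h.1 x⟩⟩

theorem orderOf_skew [Finite X] (π : Perm X) (Φ : X → ℤ) :
    orderOf (skew m π Φ) =
      orderOf π * orderOf (skew m 1 (∑ r ∈ Finset.range (orderOf π), Φ ∘ ⇑(π ^ r))) := by
  have hdvd : orderOf π ∣ orderOf (skew m π Φ) := by
    have h := pow_orderOf_eq_one (skew m π Φ)
    rw [skew_pow, skew_eq_one_iff] at h
    exact orderOf_dvd_of_pow_eq_one h.1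
  have := orderOf_pow_of_dvd (orderOf_pos π).ne' hdvd
  rw [skew_pow, pow_orderOf_eq_one] at this
  rw [this, Nat.mul_div_cancel' hdvd]

theorem orderOf_skew_one [Fintype X] {T : X → ℤ}
    (hT : Finset.univ.gcd (fun x => (T x).natAbs) ≠ 0) (l : ℕ) :
    orderOf (skew (Finset.univ.gcd (fun x => (T x).natAbs) * l) 1 T) = l := by
  set g := Finset.univ.gcd (fun x => (T x).natAbs)
  have key : ∀ j, skew (g * l) 1 T ^ j = 1 ↔ l ∣ j := fun j => by
    simp only [skew_pow, one_pow, skew_eq_one_iff, true_and, Int.natCast_dvd]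
    simp only [Finset.sum_apply, Function.comp_apply, Perm.coe_one, id_eq, Finset.sum_const,
      Finset.card_range, nsmul_eq_mul, Int.natAbs_mul, Int.natAbs_natCast]
    calc (∀ x, g * l ∣ j * (T x).natAbs)
        ↔ g * l ∣ Finset.univ.gcd (fun x => j * (T x).natAbs) := by simp [Finset.dvd_gcd_iff]
      _ ↔ l * g ∣ j * g := by rw [Finset.gcd_mul_left, normalize_eq, mul_comm g]
      _ ↔ l ∣ j := Nat.mul_dvd_mul_iff_right (Nat.pos_of_ne_zero hT)
  exact Nat.dvd_antisymm (orderOf_dvd_of_pow_eq_one ((key l).2 dvd_rfl))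
    ((key _).1 (pow_orderOf_eq_one _))

theorem exists_orderOf_skew_eq_mul [Finite X] {π : Perm X} {Φ : X → ℤ} {x₀ : X}
    (hfix : π x₀ = x₀) (hΦ : Φ x₀ ≠ 0) {l : ℕ} (hl : l ≠ 0) :
    ∃ m ≠ 0, orderOf (skew m π Φ) = orderOf π * l := by
  have := Fintype.ofFinite X
  set T := ∑ r ∈ Finset.range (orderOf π), Φ ∘ ⇑(π ^ r)
  have hT : T x₀ = orderOf π * Φ x₀ := by
    simp [T, Finset.sum_apply, Perm.pow_apply_eq_self_of_apply_eq_self hfix]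
  have hgcd : Finset.univ.gcd (fun x => (T x).natAbs) ≠ 0 := by
    rw [Ne, Finset.gcd_eq_zero_iff, not_forall]
    exact ⟨x₀, by simp [hT, hΦ, (orderOf_pos π).ne']⟩
  exact ⟨_, mul_ne_zero hgcd hl, by rw [orderOf_skew, orderOf_skew_one hgcd]⟩

end Skew

section TwistedLift

variable {P Q X : Type*} [Group P] [Group Q] {m : ℕ}

def skewHom (m : ℕ) (f : X → ℤ) : Perm X →* Perm (ZMod m × X) where
  toFun π := skew m π (f ∘ π - f)
  map_one' := by simpa using skew_one_zero
  map_mul' π σ := by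
    rw [skew_mul]
    congr 1
    ext x
    simp

variable (φ₀ : P ∗ Q →* Perm X) (f : X → ℤ)

def twistedLift (m : ℕ) : P ∗ Q →* Perm (ZMod m × X) :=
  Coprod.lift ((skewHom m 0).comp (φ₀.comp Coprod.inl)) ((skewHom m f).comp (φ₀.comp Coprod.inr))

def twistCocycle : List (P × Q) → X → ℤ
  | [] => 0
  | p :: L => twistCocycle L + (f ∘ φ₀ (Coprod.inr p.2) - f) ∘ φ₀ (altProd L)

theorem twistedLift_inl (a : P) :
    twistedLift φ₀ f m (Coprod.inl a) = skew m (φ₀ (Coprod.inl a)) 0 := by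
  simp [twistedLift, skewHom]

theorem twistedLift_inr (b : Q) :
    twistedLift φ₀ f m (Coprod.inr b) =
      skew m (φ₀ (Coprod.inr b)) (f ∘ φ₀ (Coprod.inr b) - f) := by
  simp [twistedLift, skewHom]

theorem twistedLift_altProd (L : List (P × Q)) :
    twistedLift φ₀ f m (altProd L) = skew m (φ₀ (altProd L)) (twistCocycle φ₀ f L) := by
  induction L with
  | nil => simp [twistCocycle, skew_one_zero]
  | cons p L ih =>
    rw [altProd_cons, map_mul, map_mul, ih, twistedLift_inl, twistedLift_inr, skew_mul, skew_mul,
      twistCocycle, Pi.zero_comp, add_zero, map_mul, map_mul]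

end TwistedLift

section Path

theorem exists_perm_apply_eq {α ι : Type*} [Finite α] {s t : ι → α}
    (hs : Function.Injective s) (ht : Function.Injective t) :
    ∃ ρ : Perm α, ∀ i, ρ (s i) = t i := by
  classical
  have := Fintype.ofFinite α
  let e : Set.range s ≃ Set.range t :=
    (Equiv.ofInjective s hs).symm.trans (Equiv.ofInjective t ht)
  refine ⟨e.extendSubtype, fun i => ?_⟩
  rw [Equiv.extendSubtype_apply_of_mem e _ (Set.mem_range_self i)]
  simp [e]

variable {P Q : Type*} [Group P] [Group Q]

-- Counted from the right, because the rightmost pair of `altProd L` acts first.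
def letterFromEnd (L : List (P × Q)) (i : ZMod L.length) : P × Q :=
  L.reverse.getD i.val 1

theorem letterFromEnd_mem {L : List (P × Q)} [NeZero L.length] (i : ZMod L.length) :
    letterFromEnd L i ∈ L := by
  rw [letterFromEnd, List.getD_eq_getElem _ _ (by simpa using ZMod.val_lt i)]
  exact List.mem_reverse.mp (List.getElem_mem _)

theorem letterFromEnd_length {L N M : List (P × Q)} {p : P × Q} (h : N ++ p :: M = L) :
    letterFromEnd L M.length = p := by
  have hlt : M.length < L.length := by grind
  rw [letterFromEnd, ZMod.val_natCast_of_lt hlt, ← h]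
  simp

def mulLeftMid (n : ℕ) : P →* Perm (ZMod n × P × Q) where
  toFun a := (Equiv.refl _).prodCongr ((Equiv.mulLeft a).prodCongr (Equiv.refl _))
  map_one' := by ext <;> simp
  map_mul' a a' := by ext <;> simp [mul_assoc]

def mulLeftLast (n : ℕ) : Q →* Perm (ZMod n × P × Q) where
  toFun b := (Equiv.refl _).prodCongr ((Equiv.refl _).prodCongr (Equiv.mulLeft b))
  map_one' := by ext <;> simp
  map_mul' b b' := by ext <;> simp [mul_assoc]

variable {n : ℕ}

def pathAction (ρ : Perm (ZMod n × P × Q)) : P ∗ Q →* Perm (ZMod n × P × Q) :=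
  Coprod.lift ((MulAut.conj ρ⁻¹).toMonoidHom.comp (mulLeftMid n)) (mulLeftLast n)

@[simp] theorem pathAction_inr_apply (ρ : Perm (ZMod n × P × Q)) (b : Q) (i : ZMod n) (s : P)
    (t : Q) : pathAction ρ (Coprod.inr b) (i, s, t) = (i, s, b * t) := rfl

theorem pathAction_step {ρ : Perm (ZMod n × P × Q)} {i : ZMod n} {a : P} {b : Q}
    (h₁ : ρ (i, 1, b) = (i, 1, 1)) (h₂ : ρ (i + 1, 1, 1) = (i, a, 1)) :
    pathAction ρ (Coprod.inl a * Coprod.inr b) (i, 1, 1) = (i + 1, 1, 1) := by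
  simp [pathAction, mulLeftMid, mulLeftLast, h₁, ← h₂]

def IsPathPerm (L : List (P × Q)) (ρ : Perm (ZMod L.length × P × Q)) : Prop :=
  ∀ i, ρ (i, 1, (letterFromEnd L i).2) = (i, 1, 1) ∧
    ρ (i + 1, 1, 1) = (i, (letterFromEnd L i).1, 1)

theorem exists_isPathPerm [Finite P] [Finite Q] {L : List (P × Q)} (hL : CyclicallyReduced L) :
    ∃ ρ, IsPathPerm L ρ := by
  have : NeZero L.length := ⟨fun h => hL.1 (List.length_eq_zero_iff.mp h)⟩
  have hlet (i) : (letterFromEnd L i).1 ≠ 1 ∧ (letterFromEnd L i).2 ≠ 1 :=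
    hL.2 _ (letterFromEnd_mem i)
  obtain ⟨ρ, hρ⟩ := exists_perm_apply_eq
    (s := Sum.elim (fun i => (i, 1, (letterFromEnd L i).2)) (fun i => (i + 1, 1, 1)))
    (t := Sum.elim (fun i => (i, 1, 1)) (fun i => (i, (letterFromEnd L i).1, 1)))
    (by rintro (i | i) (j | j) h <;> grind)
    (by rintro (i | i) (j | j) h <;> grind)
  exact ⟨ρ, fun i => ⟨hρ (.inl i), hρ (.inr i)⟩⟩

-- Along the path every `Q`-step leaves `{x | x.2.2 = 1}`, so the twisted cocycle counts them.
def indicatorNeOne [DecidableEq Q] (x : ZMod n × P × Q) : ℤ :=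
  if x.2.2 = 1 then 0 else 1

theorem pathAction_altProd_of_append_eq [DecidableEq Q] {L : List (P × Q)}
    (hL : ∀ p ∈ L, p.2 ≠ 1) {ρ : Perm (ZMod L.length × P × Q)} (hρ : IsPathPerm L ρ)
    {N M : List (P × Q)} (h : N ++ M = L) :
    pathAction ρ (altProd M) (0, 1, 1) = ((M.length : ZMod L.length), 1, 1) ∧
      twistCocycle (pathAction ρ) indicatorNeOne M (0, 1, 1) = M.length := by
  induction M generalizing N with
  | nil => simp [twistCocycle]
  | cons p M ih =>
    obtain ⟨ih₁, ih₂⟩ := ih (N := N ++ [p]) (by simpa using h)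
    have hb : p.2 ≠ 1 := hL p (h ▸ by simp)
    obtain ⟨h₁, h₂⟩ := hρ M.length
    rw [letterFromEnd_length h] at h₁ h₂
    constructor
    · rw [altProd_cons, map_mul, Perm.mul_apply, ih₁, pathAction_step h₁ h₂, List.length_cons,
        Nat.cast_succ]
    · simp [twistCocycle, ih₁, ih₂, indicatorNeOne, hb]

end Path

theorem exists_orderOf_altProd_eq_mul {P Q : Type} [Group P] [Group Q] [Finite P] [Finite Q]
    {L : List (P × Q)} (hL : CyclicallyReduced L) :
    ∃ K : ℕ, 0 < K ∧ ∀ l : ℕ, 0 < l →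
      ∃ (H : Type) (_ : Group H) (_ : Finite H) (φ : P ∗ Q →* H),
        orderOf (φ (altProd L)) = K * l := by
  classical
  have : NeZero L.length := ⟨fun h => hL.1 (List.length_eq_zero_iff.mp h)⟩
  obtain ⟨ρ, hρ⟩ := exists_isPathPerm hL
  obtain ⟨hfix, hΦ⟩ :=
    pathAction_altProd_of_append_eq (fun p hp => (hL.2 p hp).2) hρ (List.nil_append L)
  rw [ZMod.natCast_self] at hfix
  refine ⟨orderOf (pathAction ρ (altProd L)), orderOf_pos _, fun l hl => ?_⟩
  obtain ⟨m, hm, hord⟩ :=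
    exists_orderOf_skew_eq_mul (Φ := twistCocycle (pathAction ρ) indicatorNeOne L) hfix
      (by rw [hΦ]; exact_mod_cast NeZero.ne L.length) hl.ne'
  have : NeZero m := ⟨hm⟩
  exact ⟨_, _, inferInstance, twistedLift (pathAction ρ) indicatorNeOne m,
    by rw [twistedLift_altProd, hord]⟩

theorem exists_finite_forall_map_ne_one {A : Type*} [Group A]
    (hA : ∀ a : A, a ≠ 1 → ∃ (F : Type) (_ : Group F) (_ : Finite F) (ψ : A →* F), ψ a ≠ 1)
    (s : List A) (hs : ∀ a ∈ s, a ≠ 1) :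
    ∃ (F : Type) (_ : Group F) (_ : Finite F) (ψ : A →* F), ∀ a ∈ s, ψ a ≠ 1 := by
  induction s with
  | nil => exact ⟨PUnit, inferInstance, inferInstance, 1, by simp⟩
  | cons a s ih =>
    obtain ⟨F₁, _, _, ψ₁, h₁⟩ := hA a (hs a List.mem_cons_self)
    obtain ⟨F₂, _, _, ψ₂, h₂⟩ := ih fun x hx => hs x (List.mem_cons_of_mem _ hx)
    refine ⟨F₁ × F₂, inferInstance, inferInstance, ψ₁.prod ψ₂, ?_⟩
    rintro x (_ | ⟨_, hx⟩)
    · exact fun h => h₁ (congrArg Prod.fst h)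
    · exact fun h => h₂ x hx (congrArg Prod.snd h)

end FreeProductOrder

open FreeProductOrder in
/-- Let `G = A ∗ B` be the free product of two residually finite groups
and let `u ∈ G` lie in no conjugate of `A` or `B`. Then there is `K > 0` such that for
every positive integer `l` there is a surjection `φ` of `G` onto a finite group with
`orderOf (φ u) = K * l`. -/
theorem freeProduct_single_element_order_control
    {A B : Type*} [Group A] [Group B]
    (hA : ∀ a : A, a ≠ 1 → ∃ (F : Type) (_ : Group F) (_ : Finite F) (ψ : A →* F), ψ a ≠ 1)
    (hB : ∀ b : B, b ≠ 1 → ∃ (F : Type) (_ : Group F) (_ : Finite F) (ψ : B →* F), ψ b ≠ 1)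
    (u : A ∗ B)
    (hu : ¬ ∃ g : A ∗ B,
        g * u * g⁻¹ ∈ (Monoid.Coprod.inl : A →* A ∗ B).range ∨
        g * u * g⁻¹ ∈ (Monoid.Coprod.inr : B →* A ∗ B).range) :
    ∃ K : ℕ, 0 < K ∧ ∀ l : ℕ, 0 < l →
      ∃ (H : Type) (_ : Group H) (_ : Finite H) (φ : A ∗ B →* H),
        Function.Surjective φ ∧ orderOf (φ u) = K * l := by
  obtain ⟨L, hL, hconj⟩ := exists_cyclicallyReduced_isConj (u := u)
    (fun a ha => hu (by obtain ⟨g, hg⟩ := isConj_iff.mp ha; exact ⟨g, .inl ⟨a, hg.symm⟩⟩))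
    (fun b hb => hu (by obtain ⟨g, hg⟩ := isConj_iff.mp hb; exact ⟨g, .inr ⟨b, hg.symm⟩⟩))
  obtain ⟨P, _, _, ψ, hψ⟩ := exists_finite_forall_map_ne_one hA (L.map Prod.fst)
    (by simpa using fun a b h => (hL.2 (a, b) h).1)
  obtain ⟨Q, _, _, χ, hχ⟩ := exists_finite_forall_map_ne_one hB (L.map Prod.snd)
    (by simpa using fun b a h => (hL.2 (a, b) h).2)
  have hL' : CyclicallyReduced (L.map (Prod.map ψ χ)) := by
    refine ⟨by simpa using hL.1, ?_⟩
    simp only [List.mem_map, Prod.exists]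
    rintro _ ⟨a, b, h, rfl⟩
    exact ⟨hψ a (List.mem_map_of_mem h), hχ b (List.mem_map_of_mem h)⟩
  obtain ⟨K, hK, hord⟩ := exists_orderOf_altProd_eq_mul hL'
  refine ⟨K, hK, fun l hl => ?_⟩
  obtain ⟨H, _, _, φ, hφ⟩ := hord l hl
  let φ' := φ.comp (Coprod.map ψ χ)
  refine ⟨φ'.range, inferInstance, inferInstance, φ'.rangeRestrict,
    φ'.rangeRestrict_surjective, ?_⟩
  rw [← Subgroup.orderOf_coe, MonoidHom.coe_rangeRestrict, (φ'.map_isConj hconj).orderOf_eq]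
  simpa [φ', map_altProd] using hφ
end

section
/- Let G = A ∗ B be the free product of two finite groups A and B, let q ∈ G, and let S be a finite subset of G disjoint from the cyclic subgroup ⟨q⟩ generated by q. Then there exists a finite group H and a group homomorphism φ : G → H such that the image φ(S) is disjoint from the cyclic subgroup generated by φ(q), i.e., for every s ∈ S and every integer k, φ(s) ≠ φ(q)^k. -/
open scoped Monoid.Coprod

/-!
Let `H ≤ A ∗ B` be a finitely generated subgroup, and let `m` exceed the word lengths of its
generators and of the elements of `S`. The cosets `gH` with `g` of word length at most `m` form a
finite set `X`. Each factor acts on `X` by left multiplication on the points whose whole orbit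
under that factor stays in `X`, and trivially on the others; since these points form an invariant
set, this is an action, and the two actions combine into one of `A ∗ B`. An element of word length
`< m` sends the coset `H` to its own coset, so the generators of `H`, hence all of `H`, fix
`H ∈ X`, while every `s ∈ S` moves it. Taking `H = ⟨q⟩` gives the theorem in `Perm X`.
-/

section TruncatedAction

variable {K α : Type*} [Group K] (ρ : K →* Equiv.Perm α) (W : Set α)

open Classical in
noncomputable def truncatedSMul (k : K) (x : W) : W :=
  if h : ∀ k', ρ k' x ∈ W then ⟨ρ k x, h k⟩ else x

variable {ρ W}

lemma truncatedSMul_of_forall {x : W} (h : ∀ k', ρ k' x ∈ W) (k : K) :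
    truncatedSMul ρ W k x = ⟨ρ k x, h k⟩ :=
  dif_pos h

lemma truncatedSMul_of_not_forall {x : W} (h : ¬ ∀ k', ρ k' x ∈ W) (k : K) :
    truncatedSMul ρ W k x = x :=
  dif_neg h

lemma forall_mem_apply_of_forall_mem {x : α} (h : ∀ k', ρ k' x ∈ W) (k : K) :
    ∀ k', ρ k' (ρ k x) ∈ W := fun k' => by
  simpa [Equiv.Perm.mul_apply] using h (k' * k)

variable (ρ W)

lemma truncatedSMul_one (x : W) : truncatedSMul ρ W 1 x = x := by
  by_cases h : ∀ k', ρ k' x ∈ W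
  · simp [truncatedSMul_of_forall h]
  · exact truncatedSMul_of_not_forall h 1

lemma truncatedSMul_mul (k l : K) (x : W) :
    truncatedSMul ρ W (k * l) x = truncatedSMul ρ W k (truncatedSMul ρ W l x) := by
  by_cases h : ∀ k', ρ k' x ∈ W
  · rw [truncatedSMul_of_forall h, truncatedSMul_of_forall h,
      truncatedSMul_of_forall (forall_mem_apply_of_forall_mem h l)]
    simp [Equiv.Perm.mul_apply]
  · simp only [truncatedSMul_of_not_forall h]

noncomputable def truncatedAction : K →* Equiv.Perm W where
  toFun k :=
    { toFun := truncatedSMul ρ W k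
      invFun := truncatedSMul ρ W k⁻¹
      left_inv x := by rw [← truncatedSMul_mul, inv_mul_cancel, truncatedSMul_one]
      right_inv x := by rw [← truncatedSMul_mul, mul_inv_cancel, truncatedSMul_one] }
  map_one' := Equiv.ext (truncatedSMul_one ρ W)
  map_mul' k l := Equiv.ext (truncatedSMul_mul ρ W k l)

variable {ρ W}

lemma truncatedAction_apply_of_forall {x : W} (h : ∀ k', ρ k' x ∈ W) (k : K) :
    (truncatedAction ρ W k x : α) = ρ k x := by
  simp [truncatedAction, truncatedSMul_of_forall h]

end TruncatedAction

namespace Monoid.Coprod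

variable {A B : Type*} [Group A] [Group B]

def wordBall (m : ℕ) : Set (A ∗ B) := mk '' {w | w.length ≤ m}

lemma mk_mem_wordBall {w : FreeMonoid (A ⊕ B)} {m : ℕ} (hw : w.length ≤ m) :
    mk w ∈ wordBall m :=
  ⟨w, hw, rfl⟩

lemma wordBall_finite [Finite A] [Finite B] (m : ℕ) : (wordBall m : Set (A ∗ B)).Finite :=
  ((List.finite_length_le (A ⊕ B) m).preimage FreeMonoid.toList.injective.injOn).image mk

lemma exists_subset_wordBall {F : Set (A ∗ B)} (hF : F.Finite) : ∃ m, F ⊆ wordBall m := by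
  obtain ⟨m, hm⟩ := (hF.image fun g => (mk_surjective g).choose.length).bddAbove
  exact ⟨m, fun g hg => ⟨_, hm ⟨g, hg, rfl⟩, (mk_surjective g).choose_spec⟩⟩

variable (H : Subgroup (A ∗ B))

def cosetBall (m : ℕ) : Set ((A ∗ B) ⧸ H) := QuotientGroup.mk '' wordBall m

lemma cosetBall_finite [Finite A] [Finite B] (m : ℕ) : (cosetBall H m).Finite :=
  (wordBall_finite m).image _

def cosetBallBase (m : ℕ) : cosetBall H m :=
  ⟨((1 : A ∗ B) : (A ∗ B) ⧸ H), 1, ⟨1, Nat.zero_le m, map_one mk⟩, rfl⟩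

noncomputable def cosetAction (m : ℕ) : A ∗ B →* Equiv.Perm (cosetBall H m) :=
  lift (truncatedAction ((MulAction.toPermHom (A ∗ B) ((A ∗ B) ⧸ H)).comp inl) _)
    (truncatedAction ((MulAction.toPermHom (A ∗ B) ((A ∗ B) ⧸ H)).comp inr) _)

variable {H} in
lemma cosetAction_inl {m : ℕ} (a : A) :
    cosetAction H m (inl a) =
      truncatedAction ((MulAction.toPermHom (A ∗ B) ((A ∗ B) ⧸ H)).comp inl) _ a :=
  lift_apply_inl _ _ a

variable {H} in
lemma cosetAction_inr {m : ℕ} (b : B) :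
    cosetAction H m (inr b) =
      truncatedAction ((MulAction.toPermHom (A ∗ B) ((A ∗ B) ⧸ H)).comp inr) _ b :=
  lift_apply_inr _ _ b

lemma cosetAction_mk_apply_base {m : ℕ} (w : FreeMonoid (A ⊕ B)) (hw : w.length < m) :
    (cosetAction H m (mk w) (cosetBallBase H m) : (A ∗ B) ⧸ H) = (mk w : A ∗ B) := by
  induction w using FreeMonoid.inductionOn' with
  | one => simp [cosetBallBase]
  | of_mul x w ih =>
    rw [FreeMonoid.length_mul, FreeMonoid.length_of] at hw
    have hc := ih (by omega)
    have hball : ∀ y, ((mk (.of y * w) : A ∗ B) : (A ∗ B) ⧸ H) ∈ cosetBall H m := fun y =>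
      ⟨_, mk_mem_wordBall (by rw [FreeMonoid.length_mul, FreeMonoid.length_of]; omega), rfl⟩
    rw [map_mul, map_mul, Equiv.Perm.mul_apply]
    rcases x with a | b
    · rw [mk_of_inl, cosetAction_inl, truncatedAction_apply_of_forall]
      · simp [hc]
      · intro a'; simpa [hc, MulAction.Quotient.smul_coe] using hball (.inl a')
    · rw [mk_of_inr, cosetAction_inr, truncatedAction_apply_of_forall]
      · simp [hc]
      · intro b'; simpa [hc, MulAction.Quotient.smul_coe] using hball (.inr b')

variable {H} in
lemma cosetAction_apply_base_eq_iff {m : ℕ} {g : A ∗ B} (hg : g ∈ wordBall m) :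
    cosetAction H (m + 1) g (cosetBallBase H (m + 1)) = cosetBallBase H (m + 1) ↔ g ∈ H := by
  obtain ⟨w, hw, rfl⟩ := hg
  rw [Subtype.ext_iff, cosetAction_mk_apply_base H w (Nat.lt_succ_of_le hw)]
  simp [cosetBallBase, QuotientGroup.eq]

theorem exists_perm_fin_separating_fg_subgroup [Finite A] [Finite B] {H : Subgroup (A ∗ B)}
    (hH : H.FG) {S : Set (A ∗ B)} (hS : S.Finite) (hSH : ∀ s ∈ S, s ∉ H) :
    ∃ (n : ℕ) (φ : A ∗ B →* Equiv.Perm (Fin n)) (x : Fin n),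
      (∀ h ∈ H, φ h x = x) ∧ ∀ s ∈ S, φ s x ≠ x := by
  obtain ⟨Q, rfl⟩ := hH
  obtain ⟨m, hm⟩ := exists_subset_wordBall (Q.finite_toSet.union hS)
  set H := Subgroup.closure (Q : Set (A ∗ B))
  set x₀ := cosetBallBase H (m + 1)
  have hfix : H ≤ (MulAction.stabilizer _ x₀).comap (cosetAction H (m + 1)) :=
    (Subgroup.closure_le _).2 fun q hq =>
      (cosetAction_apply_base_eq_iff (hm (.inl hq))).2 (Subgroup.subset_closure hq)
  have : Finite (cosetBall H (m + 1)) := (cosetBall_finite H (m + 1)).to_subtype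
  obtain ⟨n, ⟨e⟩⟩ := Finite.exists_equiv_fin (cosetBall H (m + 1))
  refine ⟨n, e.permCongrHom.toMonoidHom.comp (cosetAction H (m + 1)), e x₀, fun h hh => ?_,
    fun s hs => ?_⟩
  · simpa [Equiv.permCongrHom_coe, Equiv.permCongr_apply] using hfix hh
  · simpa [Equiv.permCongrHom_coe, Equiv.permCongr_apply] using
      (cosetAction_apply_base_eq_iff (hm (.inr hs))).not.2 (hSH s hs)

end Monoid.Coprod

/-- cyclic subgroup separability of free products of finite groups.
Let `G = A ∗ B` with `A, B` finite, `q ∈ G`, and let `S` be a finite subset of `G`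
disjoint from the cyclic subgroup `⟨q⟩`. Then there is a homomorphism `φ` of `G` to a
finite group such that `φ(S)` is disjoint from the cyclic subgroup generated by `φ q`. -/
theorem freeProduct_cyclic_subgroup_separable
    {A B : Type*} [Group A] [Group B] [Finite A] [Finite B]
    (q : A ∗ B) (S : Finset (A ∗ B))
    (hS : ∀ s ∈ S, ∀ k : ℤ, s ≠ q ^ k) :
    ∃ (H : Type) (_ : Group H) (_ : Finite H) (φ : A ∗ B →* H),
      ∀ s ∈ S, ∀ k : ℤ, φ s ≠ (φ q) ^ k := by
  have hfg : (Subgroup.zpowers q).FG := ⟨{q}, by simp [Subgroup.zpowers_eq_closure]⟩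
  have hdisj : ∀ s ∈ (S : Set (A ∗ B)), s ∉ Subgroup.zpowers q := fun s hs hsq =>
    let ⟨k, hk⟩ := Subgroup.mem_zpowers_iff.1 hsq
    hS s hs k hk.symm
  obtain ⟨n, φ, x, hfix, hmove⟩ :=
    Monoid.Coprod.exists_perm_fin_separating_fg_subgroup hfg S.finite_toSet hdisj
  refine ⟨Equiv.Perm (Fin n), inferInstance, inferInstance, φ, fun s hs k hsk => hmove s hs ?_⟩
  rw [hsk, ← map_zpow]
  exact hfix _ (Subgroup.zpow_mem_zpowers q k)
end
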